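/- For positive integers A ≥ B ≥ C ≥ 1 and 0 ≤ r ≤ A-2, the linear map U_r : R_r → R_{r+1} given by multiplication by x+y+z on R = ℤ[x,y,z]/(x^A,y^B,z^C) has Smith normal form consisting entirely of 1's; in particular its cokernel is a free ℤ-module of rank h(r+1)-h(r), where h(s) is the number of monomials of degree s nonzero in R. -/

import Mathlib

open Matrix

/-- The monomials `x^i y^j z^k` of total degree `s` that are nonzero in
`ℤ[x,y,z]/(x^A, y^B, z^C)`, i.e. triples with `i < A`, `j < B`, `k < C`, `i+j+k = s`. -/
def Mon (A B C s : ℕ) : Type :=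
  {v : Fin A × Fin B × Fin C // (v.1 : ℕ) + (v.2.1 : ℕ) + (v.2.2 : ℕ) = s}

instance (A B C s : ℕ) : Fintype (Mon A B C s) := by unfold Mon; infer_instance
instance (A B C s : ℕ) : DecidableEq (Mon A B C s) := by unfold Mon; infer_instance

/-- `h(s)`: the rank of the degree-`s` homogeneous component. -/
def hdim (A B C s : ℕ) : ℕ := Fintype.card (Mon A B C s)

/-- The matrix of multiplication by `x+y+z` from degree `r` to degree `r+1`,
in the monomial bases: the entry in row `w`, column `v` is `1` iff `v` divides `w`. -/
def Umat (A B C r : ℕ) : Matrix (Mon A B C (r+1)) (Mon A B C r) ℤ :=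
  Matrix.of fun w v =>
    if (v.1.1 : ℕ) ≤ (w.1.1 : ℕ) ∧ (v.1.2.1 : ℕ) ≤ (w.1.2.1 : ℕ) ∧
        (v.1.2.2 : ℕ) ≤ (w.1.2.2 : ℕ) then (1 : ℤ) else 0

/-!
Since `r + 1 < A`, multiplication by `x` embeds the degree-`r` monomials into the degree-`(r+1)`
ones. The rows of `U_r` at the monomials `x·m` form a square block that is lower unitriangular
when monomials are ordered lexicographically by their `y`- and `z`-exponents: if `m'` divides
`x·m` and has the same degree as `m`, its `y`- and `z`-exponents are at most those of `m`.
A matrix with an invertible maximal minor is row-equivalent to the identity padded by zero rows;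
it then has a left inverse, so its image is a direct summand and its cokernel is free.
-/

section SmithNormalForm

variable {R : Type*} [CommRing R] {m n : Type*} [Fintype m] [Fintype n] [DecidableEq m]
  [DecidableEq n]

theorem Matrix.exists_isUnit_det_mul_eq_submatrix_one (U : Matrix m n R) (e : n ↪ m)
    (hU : IsUnit (U.submatrix e id).det) :
    ∃ P : Matrix m m R, IsUnit P.det ∧ P * U = (1 : Matrix m m R).submatrix id e := by
  set M := U.submatrix e id
  set S := (1 : Matrix m m R).submatrix e id
  set E := (1 : Matrix m m R).submatrix id e
  have hSU : S * U = M := by simpa using one_submatrix_mul e (Equiv.refl m) U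
  have hSE : S * E = 1 := by
    rw [← submatrix_mul _ _ _ _ _ Function.bijective_id, Matrix.mul_one, submatrix_one_embedding]
  have hMM : M⁻¹ * M = 1 := nonsing_inv_mul M hU
  -- `P₁` clears the rows outside `e`, then `P₂` replaces the block `M` by `1`.
  set P₁ : Matrix m m R := 1 - (1 - E * S) * U * M⁻¹ * S
  set P₂ : Matrix m m R := 1 + E * (M⁻¹ - 1) * S
  have hP₁U : P₁ * U = E * M := by
    simp only [P₁, Matrix.sub_mul, Matrix.one_mul, Matrix.mul_assoc, hSU, hMM, Matrix.mul_one]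
    rw [← hSU]
    abel
  have hP₂EM : P₂ * (E * M) = E := by
    simp only [P₂, Matrix.add_mul, Matrix.one_mul, Matrix.mul_assoc]
    simp only [← Matrix.mul_assoc S, hSE, Matrix.one_mul, Matrix.sub_mul, hMM, Matrix.mul_sub,
      Matrix.mul_one]
    abel
  have hP₁ : P₁.det = 1 := by
    rw [det_one_sub_mul_comm]
    simp [Matrix.mul_sub, Matrix.sub_mul, ← Matrix.mul_assoc, hSE]
  have hP₂ : P₂.det = M⁻¹.det := by
    rw [det_one_add_mul_comm, ← Matrix.mul_assoc, hSE, Matrix.one_mul, add_sub_cancel]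
  refine ⟨P₂ * P₁, ?_, by rw [Matrix.mul_assoc, hP₁U, hP₂EM]⟩
  rw [det_mul, hP₁, hP₂, mul_one]
  exact isUnit_nonsing_inv_det M hU

end SmithNormalForm

theorem LinearMap.isCompl_range_ker_of_comp_eq_id {R M N : Type*} [Ring R] [AddCommGroup M]
    [AddCommGroup N] [Module R M] [Module R N] {f : M →ₗ[R] N} {g : N →ₗ[R] M}
    (h : g ∘ₗ f = LinearMap.id) : IsCompl (range f) (ker g) := by
  have hgf (x : M) : g (f x) = x := LinearMap.congr_fun h x
  constructor
  · rw [Submodule.disjoint_def]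
    rintro _ ⟨x, rfl⟩ hx
    rw [mem_ker, hgf] at hx
    rw [hx, map_zero]
  · rw [codisjoint_iff, eq_top_iff]
    intro y _
    exact Submodule.mem_sup.2 ⟨f (g y), mem_range_self f _, y - f (g y),
      by rw [mem_ker, map_sub, hgf, sub_self], add_sub_cancel _ _⟩

section Cokernel

variable {R : Type*} [CommRing R] [IsDomain R] {m n : Type*} [Fintype m] [Fintype n]
  [DecidableEq n]

theorem Matrix.free_cokernel_of_mul_eq_one [IsPrincipalIdealRing R] {U : Matrix m n R} {V : Matrix n m R}
    (h : V * U = 1) : Module.Free R ((m → R) ⧸ LinearMap.range U.mulVecLin) := by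
  have hVU : V.mulVecLin ∘ₗ U.mulVecLin = LinearMap.id := by
    rw [← mulVecLin_mul, h, mulVecLin_one]
  exact Module.Free.of_equiv
    (Submodule.quotientEquivOfIsCompl _ _ (LinearMap.isCompl_range_ker_of_comp_eq_id hVU)).symm

theorem Matrix.finrank_cokernel_of_mul_eq_one {U : Matrix m n R} {V : Matrix n m R}
    (h : V * U = 1) :
    Module.finrank R ((m → R) ⧸ LinearMap.range U.mulVecLin)
      = Fintype.card m - Fintype.card n := by
  have hinj : Function.Injective U.mulVecLin := fun x y hxy => by
    simpa [mulVec_mulVec, h] using congrArg V.mulVec hxy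
  have := (LinearMap.range U.mulVecLin).finrank_quotient_add_finrank
  rw [LinearMap.finrank_range_of_inj hinj, Module.finrank_fintype_fun_eq_card,
    Module.finrank_fintype_fun_eq_card] at this
  omega

end Cokernel

namespace Mon

variable {A B C s : ℕ}

def yz (v : Mon A B C s) : ℕ ×ₗ ℕ := toLex ((v.1.2.1 : ℕ), (v.1.2.2 : ℕ))

theorem yz_injective : Function.Injective (yz : Mon A B C s → ℕ ×ₗ ℕ) := by
  rintro ⟨⟨i, j, k⟩, hu⟩ ⟨⟨i', j', k'⟩, hv⟩ h
  simp only [yz, toLex_inj, Prod.mk.injEq] at h hu hv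
  obtain ⟨hj, hk⟩ := h
  have hi : (i : ℕ) = i' := by omega
  obtain rfl := Fin.ext hi
  obtain rfl := Fin.ext hj
  obtain rfl := Fin.ext hk
  rfl

def mulX (h : s + 1 < A) : Mon A B C s ↪ Mon A B C (s + 1) where
  toFun v := ⟨(⟨v.1.1 + 1, by have := v.2; omega⟩, v.1.2.1, v.1.2.2),
    by simp only; have := v.2; omega⟩
  inj' _ _ huv := yz_injective (congrArg yz huv :)

end Mon

theorem det_Umat_submatrix_mulX {A B C r : ℕ} (h : r + 1 < A) :
    ((Umat A B C r).submatrix (Mon.mulX h) id).det = 1 := by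
  let _ : LinearOrder (Mon A B C r) := LinearOrder.lift' Mon.yz Mon.yz_injective
  rw [det_of_isLowerTriangular]
  · exact Finset.prod_eq_one fun v _ => if_pos ⟨Nat.le_succ _, le_rfl, le_rfl⟩
  · intro u v huv
    change Mon.yz u < Mon.yz v at huv
    simp only [submatrix_apply, id, Umat, of_apply, Mon.mulX]
    exact if_neg fun ⟨_, hj, hk⟩ => huv.not_ge (Prod.Lex.toLex_mono ⟨hj, hk⟩)

theorem stmt0 (A B C r : ℕ)
    (hr : r + 2 ≤ A) :
    (∃ e : Mon A B C r ↪ Mon A B C (r+1),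
      ∃ (P : Matrix (Mon A B C (r+1)) (Mon A B C (r+1)) ℤ)
        (Q : Matrix (Mon A B C r) (Mon A B C r) ℤ),
        IsUnit P.det ∧ IsUnit Q.det ∧
        P * Umat A B C r * Q = Matrix.of fun i j => if i = e j then (1 : ℤ) else 0) ∧
    Module.Free ℤ
      ((Mon A B C (r+1) → ℤ) ⧸ LinearMap.range (Umat A B C r).mulVecLin) ∧
    Module.finrank ℤ
      ((Mon A B C (r+1) → ℤ) ⧸ LinearMap.range (Umat A B C r).mulVecLin)
      = hdim A B C (r+1) - hdim A B C r := by
  have h : r + 1 < A := by omega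
  obtain ⟨P, hP, hPU⟩ := exists_isUnit_det_mul_eq_submatrix_one (Umat A B C r) (Mon.mulX h)
    (by rw [det_Umat_submatrix_mulX]; exact isUnit_one)
  let V : Matrix (Mon A B C r) (Mon A B C (r+1)) ℤ :=
    (1 : Matrix (Mon A B C (r+1)) (Mon A B C (r+1)) ℤ).submatrix (Mon.mulX h) id * P
  have hVU : V * Umat A B C r = 1 := by
    rw [Matrix.mul_assoc, hPU, ← submatrix_mul _ _ _ _ _ Function.bijective_id, Matrix.mul_one,
      submatrix_one_embedding]
  refine ⟨⟨Mon.mulX h, P, 1, hP, by simp, ?_⟩, free_cokernel_of_mul_eq_one hVU,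
    finrank_cokernel_of_mul_eq_one hVU⟩
  ext i j
  simp [hPU, one_apply]
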